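/- Let r ≥ 1, let A = (a_{i,j}) be an r×r generalised Cartan matrix, and let F be a linearly ordered field. For every tuple (s_1,…,s_r) of positive elements of F there exists a unique map k : {1,…,r} × ℤ → F such that k(i,m) > 0 for all (i,m), k satisfies the Y-frieze relation k(i,m)·k(i,m+1) = (∏_{j=i+1}^{r} (1+k(j,m))^{-a_{j,i}})·(∏_{j=1}^{i-1} (1+k(j,m+1))^{-a_{j,i}}) for all (i,m), and k(i,0) = s_i for all i ∈ {1,…,r}. -/

import Mathlib

/-!
Read column by column, the frieze relation between columns `m` and `m + 1` is a triangular
system: `k i (m + 1)` is determined by column `m` and the entries `k j (m + 1)` with `j < i`, and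
symmetrically `k i m` by column `m + 1` and the entries `k j m` with `j > i`. Solving these systems
by well-founded recursion shows that the relation is the graph of a bijection of the set of
positive columns, and a positive frieze is the `ℤ`-orbit of its column `0` under that bijection.
-/

def IsGCM {r : ℕ} (A : Matrix (Fin r) (Fin r) ℤ) : Prop :=
  (∀ i, A i i = 2) ∧ ∀ i j, i ≠ j → A i j ≤ 0 ∧ (A i j = 0 ↔ A j i = 0)

open Finset

theorem WellFounded.existsUnique_fix {ι α : Type*} [Nonempty α] {r : ι → ι → Prop}
    (hr : WellFounded r) (G : ι → (ι → α) → α)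
    (hG : ∀ i x y, (∀ j, r j i → x j = y j) → G i x = G i y) :
    ∃! x : ι → α, ∀ i, x i = G i x := by
  classical
  refine ⟨hr.fix fun i x ↦ G i fun j ↦ if hj : r j i then x j hj else Classical.arbitrary α,
    fun i ↦ ?_, fun y hy ↦ funext fun i ↦ ?_⟩
  · rw [hr.fix_eq]
    exact hG i _ _ fun j hj ↦ by simp [hj]
  · induction i using hr.induction with
    | _ i ih =>
      rw [hy i, hr.fix_eq]
      exact hG i _ _ fun j hj ↦ by simp [hj, ih j hj]

section Triangular

variable {ι F : Type*} [Fintype ι] [Field F] [LinearOrder F] [IsStrictOrderedRing F]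

theorem existsUnique_pos_of_triangular {r : ι → ι → Prop} [DecidableRel r] (hr : WellFounded r)
    (n : ι → ι → ℕ) {a b : ι → F} (ha : ∀ i, 0 < a i) (hb : ∀ i, 0 < b i) :
    ∃! x : ι → F, (∀ i, 0 < x i) ∧
      ∀ i, a i * x i = b i * ∏ j ∈ univ.filter (r · i), (1 + x j) ^ n j i := by
  set G : ι → (ι → F) → F := fun i x ↦ b i / a i * ∏ j ∈ univ.filter (r · i), (1 + x j) ^ n j i
  have hG : ∀ i x y, (∀ j, r j i → x j = y j) → G i x = G i y := fun i x y hxy ↦ by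
    simp only [G]
    congr 1
    exact prod_congr rfl fun j hj ↦ by rw [hxy j (mem_filter.mp hj).2]
  obtain ⟨x, hx, hx_unique⟩ := hr.existsUnique_fix G hG
  have hx_pos : ∀ i, 0 < x i := fun i ↦ by
    induction i using hr.induction with
    | _ i ih =>
      rw [hx i]
      exact mul_pos (div_pos (hb i) (ha i))
        (prod_pos fun j hj ↦ pow_pos (by linarith [ih j (mem_filter.mp hj).2]) _)
  have h_iff : ∀ y : ι → F, (∀ i, a i * y i = b i * ∏ j ∈ univ.filter (r · i), (1 + y j) ^ n j i)
      ↔ ∀ i, y i = G i y := fun y ↦ forall_congr' fun i ↦ by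
    rw [show G i y = _ from div_mul_eq_mul_div .., eq_div_iff (ha i).ne', mul_comm (y i), eq_comm]
  exact ⟨x, ⟨hx_pos, (h_iff x).mpr hx⟩, fun y hy ↦ hx_unique y ((h_iff y).mp hy.2)⟩

end Triangular

section YFrieze

variable {ι F : Type*} [Fintype ι] [LinearOrder ι] [Field F] [LinearOrder F] [IsStrictOrderedRing F]

def IsYFriezeStep (n : ι → ι → ℕ) (c d : ι → F) : Prop :=
  ∀ i, c i * d i = (∏ j ∈ univ.filter (fun j ↦ i < j), (1 + c j) ^ n j i) *
    ∏ j ∈ univ.filter (fun j ↦ j < i), (1 + d j) ^ n j i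

theorem existsUnique_isYFriezeStep_right (n : ι → ι → ℕ) {c : ι → F} (hc : ∀ i, 0 < c i) :
    ∃! d : ι → F, (∀ i, 0 < d i) ∧ IsYFriezeStep n c d :=
  existsUnique_pos_of_triangular wellFounded_lt n hc
    fun i ↦ prod_pos fun j _ ↦ pow_pos (by linarith [hc j]) _

theorem existsUnique_isYFriezeStep_left (n : ι → ι → ℕ) {d : ι → F} (hd : ∀ i, 0 < d i) :
    ∃! c : ι → F, (∀ i, 0 < c i) ∧ IsYFriezeStep n c d := by
  have h := existsUnique_pos_of_triangular (wellFounded_gt (α := ι)) n hd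
    (b := fun i ↦ ∏ j ∈ univ.filter (· < i), (1 + d j) ^ n j i)
    fun i ↦ prod_pos fun j _ ↦ pow_pos (by linarith [hd j]) _
  refine (existsUnique_congr fun c ↦ and_congr_right fun _ ↦ forall_congr' fun i ↦ ?_).mp h
  rw [mul_comm (d i), mul_comm (∏ j ∈ _, _)]

end YFrieze

theorem Equiv.Perm.existsUnique_int_chain {β : Type*} (e : Equiv.Perm β) (b : β) :
    ∃! x : ℤ → β, (∀ m, x (m + 1) = e (x m)) ∧ x 0 = b := by
  have h_succ : ∀ m : ℤ, (e ^ (m + 1)) b = e ((e ^ m) b) := fun m ↦ by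
    rw [add_comm, zpow_add, zpow_one, Perm.mul_apply]
  refine ⟨fun m ↦ (e ^ m) b, ⟨h_succ, by simp⟩, fun y ⟨hy, hy0⟩ ↦ funext fun m ↦ ?_⟩
  induction m using Int.induction_on with
  | zero => simpa using hy0
  | succ m ih => rw [hy, ih, h_succ]
  | pred m ih =>
    apply e.injective
    rw [← hy, ← h_succ, sub_add_cancel, ih]

theorem existsUnique_int_chain {α : Type*} {P : α → Prop} {R : α → α → Prop}
    (h_right : ∀ c, P c → ∃! d, P d ∧ R c d) (h_left : ∀ d, P d → ∃! c, P c ∧ R c d)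
    {s : α} (hs : P s) :
    ∃! x : ℤ → α, (∀ m, P (x m)) ∧ (∀ m, R (x m) (x (m + 1))) ∧ x 0 = s := by
  choose f hf hf_unique using fun c : Subtype P ↦ h_right c c.2
  let next : Subtype P → Subtype P := fun c ↦ ⟨f c, (hf c).1⟩
  have h_next : ∀ c d : Subtype P, R c d ↔ d = next c := fun c d ↦
    ⟨fun h ↦ Subtype.ext (hf_unique c d ⟨d.2, h⟩), fun h ↦ h ▸ (hf c).2⟩
  have h_bij : Function.Bijective next := by
    refine ⟨fun c c' h ↦ Subtype.ext ?_, fun d ↦ ?_⟩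
    · exact (h_left _ (next c).2).unique ⟨c.2, (h_next c _).mpr rfl⟩ ⟨c'.2, (h_next c' _).mpr h⟩
    · obtain ⟨c, ⟨hc, hcd⟩, -⟩ := h_left d d.2
      exact ⟨⟨c, hc⟩, ((h_next ⟨c, hc⟩ d).mp hcd).symm⟩
  obtain ⟨x, ⟨hx, hx0⟩, hx_unique⟩ :=
    Equiv.Perm.existsUnique_int_chain (Equiv.ofBijective next h_bij) ⟨s, hs⟩
  refine ⟨fun m ↦ x m,
    ⟨fun m ↦ (x m).2, fun m ↦ (h_next _ _).mpr (hx m), congrArg Subtype.val hx0⟩,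
    fun y ⟨hyP, hyR, hy0⟩ ↦ funext fun m ↦ ?_⟩
  have hy_eq := hx_unique (fun m ↦ ⟨y m, hyP m⟩)
    ⟨fun m ↦ (h_next ⟨y m, hyP m⟩ ⟨y (m + 1), hyP (m + 1)⟩).mp (hyR m), Subtype.ext hy0⟩
  exact congrArg Subtype.val (congrFun hy_eq m)

theorem Yfrieze_exists_unique_general {r : ℕ} {F : Type*} [Field F] [LinearOrder F] [IsStrictOrderedRing F]
    (A : Matrix (Fin r) (Fin r) ℤ)
    (s : Fin r → F) (hs : ∀ i, 0 < s i) :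
    ∃! k : Fin r → ℤ → F,
      (∀ i m, 0 < k i m) ∧
      (∀ i m, k i m * k i (m + 1) =
        (∏ j ∈ Finset.univ.filter (fun j => i < j), (1 + k j m) ^ (-(A j i)).toNat) *
        (∏ j ∈ Finset.univ.filter (fun j => j < i), (1 + k j (m + 1)) ^ (-(A j i)).toNat)) ∧
      (∀ i, k i 0 = s i) := by
  obtain ⟨x, ⟨hx_pos, hx_step, hx0⟩, hx_unique⟩ :=
    existsUnique_int_chain (R := IsYFriezeStep fun j i ↦ (-(A j i)).toNat)
      (fun _ ↦ existsUnique_isYFriezeStep_right _) (fun _ ↦ existsUnique_isYFriezeStep_left _) hs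
  refine ⟨Function.swap x,
    ⟨fun i m ↦ hx_pos m i, fun i m ↦ hx_step m i, fun i ↦ congrFun hx0 i⟩,
    fun k ⟨hk_pos, hk_step, hk0⟩ ↦ ?_⟩
  exact congrArg Function.swap
    (hx_unique (Function.swap k) ⟨fun m i ↦ hk_pos i m, fun m i ↦ hk_step i m, funext hk0⟩)

/-- For a linearly ordered field `F`, positive `F`-valued Y-frieze patterns associated to a
generalised Cartan matrix `A` are in bijection with `r`-tuples of positive elements of `F`. -/
theorem Yfrieze_exists_unique {r : ℕ} (hr : 1 ≤ r) {F : Type*} [Field F] [LinearOrder F] [IsStrictOrderedRing F]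
    (A : Matrix (Fin r) (Fin r) ℤ) (hA : IsGCM A)
    (s : Fin r → F) (hs : ∀ i, 0 < s i) :
    ∃! k : Fin r → ℤ → F,
      (∀ i m, 0 < k i m) ∧
      (∀ i m, k i m * k i (m + 1) =
        (∏ j ∈ Finset.univ.filter (fun j => i < j), (1 + k j m) ^ (-(A j i)).toNat) *
        (∏ j ∈ Finset.univ.filter (fun j => j < i), (1 + k j (m + 1)) ^ (-(A j i)).toNat)) ∧
      (∀ i, k i 0 = s i) :=
  Yfrieze_exists_unique_general A s hs
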